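/- arXiv:1408.2842 — 2 statements merged into one kernel-verified Lean document; each statement's English description precedes it below -/
import Mathlib

section
/- Let φ : A* → M be a monoid homomorphism from the free monoid over a finite alphabet A to a finite aperiodic monoid M. Then for every p ∈ M, the language φ^{-1}(p) = {w ∈ A* : φ(w) = p} is star-free over A. -/
/-- Concatenation of languages: `K · K' = {uv : u ∈ K, v ∈ K'}`. -/
def Lang.cat {α : Type*} (K K' : Set (FreeMonoid α)) : Set (FreeMonoid α) :=
  {w | ∃ u ∈ K, ∃ v ∈ K', w = u * v}

/-- The class `SF(A*)` of star-free languages over the alphabet `A`: the smallest class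
containing `A*` and `{a}` for each letter `a`, closed under union, set difference and
concatenation. -/
inductive SF {A : Type*} : Set (FreeMonoid A) → Prop
  | full : SF Set.univ
  | letter (a : A) : SF {FreeMonoid.of a}
  | union {K K'} : SF K → SF K' → SF (K ∪ K')
  | diff {K K'} : SF K → SF K' → SF (K \ K')
  | concat {K K'} : SF K → SF K' → SF (Lang.cat K K')

/-- A monoid `M` is aperiodic if for every `x ∈ M` there is an `n ∈ ℕ`
with `x ^ n = x ^ (n + 1)`. -/
def Aperiodic (M : Type*) [Monoid M] : Prop :=
  ∀ x : M, ∃ n : ℕ, x ^ n = x ^ (n + 1)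

/-!
Induct on `|M|` and, for fixed `M`, on `|A|`. If every letter maps to `1`, each fibre is `A*`
or `∅`. Otherwise pick a letter `a` with `c = φ a ≠ 1`. A word is either `a`-free, and the
fibres of those are star-free by induction on the alphabet, or it factors uniquely as `u a d v`
with `u`, `v` `a`-free and `d = u₁ a ⋯ uₖ a`. Reading `d` as the word `φ u₁ ⋯ φ uₖ` over the
alphabet `M`, the value `c * φ d` is the image of that word under `q ↦ cqc` in the local divisor
`cM ∩ Mc`, which is aperiodic and, as `c` is not a unit, smaller than `M`; so its fibres are
star-free over `M`. Since `a` marks the block boundaries, substituting `K_q a` for each letter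
`q` (`K_q` the `a`-free words of value `q`) commutes with union, difference and concatenation,
hence carries star-free languages over `M` to star-free languages over `A`.
-/

open scoped Pointwise
open Function

universe u

theorem List.eq_and_eq_of_append_cons_eq {α : Type*} {a : α} {u u' t t' : List α} (hu : a ∉ u)
    (hu' : a ∉ u') (h : u ++ a :: t = u' ++ a :: t') : u = u' ∧ t = t' := by
  simp only [List.append_eq_append_iff, List.cons_eq_append_iff] at h
  aesop

namespace FreeMonoid

variable {α β : Type*}

@[elab_as_elim]
theorem inductionOn_mul_of {motive : FreeMonoid α → Prop} (w : FreeMonoid α) (one : motive 1)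
    (mul_of : ∀ w x, motive w → motive (w * of x)) : motive w :=
  List.reverseRecOn (motive := fun l => motive (ofList l)) w.toList one fun _ x h => mul_of _ x h

theorem eq_one_or_exists_eq_mul_of (w : FreeMonoid α) : w = 1 ∨ ∃ v x, w = v * of x :=
  w.inductionOn_mul_of (.inl rfl) fun v x _ => .inr ⟨v, x, rfl⟩

theorem mem_iff_exists_mul_of_mul_eq {x : α} {w : FreeMonoid α} :
    x ∈ w ↔ ∃ u v, u * of x * v = w := by
  change x ∈ w.toList ↔ _
  rw [List.mem_iff_append]
  constructor
  · rintro ⟨s, t, h⟩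
    exact ⟨ofList s, ofList t, toList.injective (by simpa [toList_mul, toList_of] using h.symm)⟩
  · rintro ⟨u, v, rfl⟩
    exact ⟨u.toList, v.toList, by simp [toList_mul, toList_of]⟩

theorem range_map (f : α → β) : Set.range (map f) = {w | ∀ x ∈ w, x ∈ Set.range f} :=
  Set.range_list_map f

theorem map_injective {f : α → β} (hf : Injective f) : Injective (map f) :=
  List.map_injective_iff.mpr hf

theorem eq_and_eq_of_mul_of_mul_eq {a : α} {u u' t t' : FreeMonoid α} (hu : a ∉ u)
    (hu' : a ∉ u') (h : u * of a * t = u' * of a * t') : u = u' ∧ t = t' := by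
  have := List.eq_and_eq_of_append_cons_eq (u := u.toList) (u' := u'.toList) hu hu'
    (by simpa [toList_mul, toList_of] using congrArg toList h)
  exact ⟨toList.injective this.1, toList.injective this.2⟩

end FreeMonoid

open FreeMonoid

theorem Lang.cat_eq_mul {α : Type*} (K K' : Set (FreeMonoid α)) : Lang.cat K K' = K * K' := by
  ext w
  simp [Lang.cat, Set.mem_mul, eq_comm]

namespace SF

variable {A B : Type*}

theorem empty : SF (∅ : Set (FreeMonoid A)) := by
  simpa using diff (full (A := A)) full

theorem mul {K K' : Set (FreeMonoid A)} (h : SF K) (h' : SF K') : SF (K * K') :=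
  Lang.cat_eq_mul K K' ▸ concat h h'

theorem biUnion_finset {ι : Type*} (s : Finset ι) {f : ι → Set (FreeMonoid A)}
    (h : ∀ i ∈ s, SF (f i)) : SF (⋃ i ∈ s, f i) := by
  classical
  induction s using Finset.induction_on with
  | empty => simpa using empty
  | insert i s _ ih =>
    rw [Finset.set_biUnion_insert]
    exact union (h i (by simp)) (ih fun j hj => h j (by simp [hj]))

theorem iUnion {ι : Sort*} [Finite ι] {f : ι → Set (FreeMonoid A)} (h : ∀ i, SF (f i)) :
    SF (⋃ i, f i) := by
  cases nonempty_fintype (PLift ι)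
  rw [← Set.iUnion_plift_down]
  simpa using biUnion_finset Finset.univ fun i _ => h i.down

theorem one [Finite A] : SF ({1} : Set (FreeMonoid A)) := by
  have h : ({1} : Set (FreeMonoid A)) = Set.univ \ ⋃ x, Set.univ * {of x} := by
    ext w
    rcases w.eq_one_or_exists_eq_mul_of with rfl | ⟨v, x, rfl⟩ <;> simp
  rw [h]
  exact diff full (iUnion fun x => mul full (letter x))

theorem setOf_forall_mem [Finite A] (S : Set A) : SF {w : FreeMonoid A | ∀ x ∈ w, x ∈ S} := by
  have h : {w : FreeMonoid A | ∀ x ∈ w, x ∈ S} =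
      Set.univ \ ⋃ x : ↥Sᶜ, Set.univ * {of x.1} * Set.univ := by
    ext w
    simp [Set.mem_mul, ← mem_iff_exists_mul_of_mul_eq, not_imp_not]
  rw [h]
  exact diff full (iUnion fun x => mul (mul full (letter x.1)) full)

theorem image_map [Finite B] {f : A → B} (hf : Injective f) {L : Set (FreeMonoid A)}
    (h : SF L) : SF (map f '' L) := by
  induction h with
  | full => rw [Set.image_univ, range_map]; exact setOf_forall_mem _
  | letter a => rw [Set.image_singleton, map_of]; exact letter (f a)
  | union _ _ ih ih' => rw [Set.image_union]; exact union ih ih'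
  | diff _ _ ih ih' => rw [Set.image_sdiff (map_injective hf)]; exact diff ih ih'
  | concat _ _ ih ih' => rw [Lang.cat_eq_mul, Set.image_mul]; exact mul ih ih'

end SF

theorem Aperiodic.eq_one_of_isUnit {M : Type*} [Monoid M] (hM : Aperiodic M) {c : M}
    (hc : IsUnit c) : c = 1 := by
  obtain ⟨n, hn⟩ := hM c
  exact ((hc.pow n).mul_left_cancel (by rw [mul_one, ← pow_succ, hn])).symm

section LocalDivisor

variable {M : Type*} [Monoid M]

/-- The local divisor of `M` at `c`: the set `cM ∩ Mc` with the product `xc ∘ cy = xcy`, which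
does not depend on the choice of `x` (it equals `(xc)y`, and also `x(cy)`), and with unit `c`. -/
@[ext]
structure LocalDivisor (c : M) where
  val : M
  mem_left : ∃ u, c * u = val
  mem_right : ∃ v, v * c = val

namespace LocalDivisor

variable {c : M}

instance [Finite M] : Finite (LocalDivisor c) :=
  Finite.of_injective val fun _ _ => LocalDivisor.ext

noncomputable def leftFactor (x : LocalDivisor c) : M := x.mem_right.choose

theorem leftFactor_mul (x : LocalDivisor c) : leftFactor x * c = x.val :=
  x.mem_right.choose_spec

noncomputable instance : Mul (LocalDivisor c) where
  mul x y :=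
    { val := leftFactor x * y.val
      mem_left := by
        obtain ⟨u, hu⟩ := y.mem_left
        obtain ⟨u', hu'⟩ := x.mem_left
        refine ⟨u' * u, ?_⟩
        rw [← hu, ← mul_assoc (leftFactor x), leftFactor_mul, ← hu', mul_assoc]
      mem_right := by
        obtain ⟨v, hv⟩ := y.mem_right
        exact ⟨leftFactor x * v, by rw [mul_assoc, hv]⟩ }

theorem val_mul (x y : LocalDivisor c) : (x * y).val = leftFactor x * y.val := rfl

theorem val_mul_of_mul_eq {x : LocalDivisor c} (y : LocalDivisor c) {v : M}
    (hv : v * c = x.val) : (x * y).val = v * y.val := by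
  obtain ⟨u, hu⟩ := y.mem_left
  rw [val_mul, ← hu, ← mul_assoc, leftFactor_mul, ← hv, mul_assoc]

noncomputable instance : Monoid (LocalDivisor c) where
  one := ⟨c, ⟨1, mul_one c⟩, 1, one_mul c⟩
  one_mul x := LocalDivisor.ext <| by
    rw [val_mul_of_mul_eq x (one_mul c), one_mul]
  mul_one x := LocalDivisor.ext <| by
    rw [val_mul]
    exact leftFactor_mul x
  mul_assoc x y z := LocalDivisor.ext <| by
    have hxy : leftFactor x * leftFactor y * c = (x * y).val := by
      rw [mul_assoc, leftFactor_mul, val_mul]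
    rw [val_mul_of_mul_eq z hxy, val_mul x, val_mul_of_mul_eq z (leftFactor_mul y), mul_assoc]

theorem val_one : (1 : LocalDivisor c).val = c := rfl

theorem val_pow_succ (x : LocalDivisor c) (n : ℕ) :
    (x ^ (n + 1)).val = leftFactor x ^ n * x.val := by
  induction n with
  | zero => simp
  | succ n ih =>
    have hv : leftFactor x ^ (n + 1) * c = (x ^ (n + 1)).val := by
      rw [ih, ← leftFactor_mul x, pow_succ, mul_assoc]
    rw [pow_succ x, val_mul_of_mul_eq x hv]

theorem val_ne_one (hM : Aperiodic M) (hc : c ≠ 1) (x : LocalDivisor c) : x.val ≠ 1 := by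
  obtain ⟨_, ⟨u, hu⟩, v, hv⟩ := x
  rintro rfl
  have hvu : v = u := left_inv_eq_right_inv hv hu
  exact hc (hM.eq_one_of_isUnit (isUnit_iff_exists.mpr ⟨u, hu, hvu ▸ hv⟩))

theorem card_lt [Finite M] (hM : Aperiodic M) (hc : c ≠ 1) :
    Nat.card (LocalDivisor c) < Nat.card M :=
  (Nat.card_le_card_of_injective (fun x => (⟨x.val, val_ne_one hM hc x⟩ : {m : M // m ≠ 1}))
    fun _ _ h => LocalDivisor.ext (congrArg Subtype.val h)).trans_lt
    (Finite.card_subtype_lt (x := 1) (by simp))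

noncomputable def sandwich (c : M) : FreeMonoid M →* LocalDivisor c :=
  FreeMonoid.lift fun q => ⟨c * q * c, ⟨q * c, by rw [mul_assoc]⟩, c * q, rfl⟩

theorem val_sandwich_of_mul (q : M) (γ : FreeMonoid M) :
    (sandwich c (of q * γ)).val = c * q * (sandwich c γ).val := by
  rw [map_mul, val_mul_of_mul_eq _ (v := c * q) rfl]

end LocalDivisor

theorem Aperiodic.localDivisor (hM : Aperiodic M) (c : M) : Aperiodic (LocalDivisor c) := by
  intro x
  obtain ⟨n, hn⟩ := hM (LocalDivisor.leftFactor x)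
  exact ⟨n + 1, LocalDivisor.ext <| by
    rw [LocalDivisor.val_pow_succ, LocalDivisor.val_pow_succ, hn]⟩

end LocalDivisor

theorem Set.biUnion_mul_eq_mul_biUnion {F α β : Type*} [Mul α] [Mul β] [FunLike F α (Set β)]
    [MulHomClass F α (Set β)] (f : F) (s t : Set α) :
    ⋃ x ∈ s * t, f x = (⋃ x ∈ s, f x) * ⋃ y ∈ t, f y := by
  rw [← Set.image2_mul (s := s), Set.biUnion_image2]
  simp only [map_mul, Set.iUnion₂_mul (t := ⋃ y ∈ t, f y), Set.mul_iUnion₂]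

section Blocks

variable {A M : Type*} [Monoid M] (φ : FreeMonoid A →* M) (a : A)

def fiberAvoiding (q : M) : Set (FreeMonoid A) := {w | a ∉ w ∧ φ w = q}

def blockSubst : FreeMonoid M →* Set (FreeMonoid A) :=
  FreeMonoid.lift fun q => fiberAvoiding φ a q * {of a}

variable {φ a}

theorem blockSubst_one : blockSubst φ a 1 = {1} := map_one _

theorem blockSubst_of (q : M) : blockSubst φ a (of q) = fiberAvoiding φ a q * {of a} := rfl

theorem mem_blockSubst_of_mul {q : M} {γ : FreeMonoid M} {d : FreeMonoid A} :
    d ∈ blockSubst φ a (of q * γ) ↔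
      ∃ u, a ∉ u ∧ φ u = q ∧ ∃ d' ∈ blockSubst φ a γ, u * of a * d' = d := by
  simp [map_mul, blockSubst_of, Set.mem_mul, fiberAvoiding, and_assoc]

theorem mul_mul_of_mem_blockSubst_mul_of {γ : FreeMonoid M} {d v : FreeMonoid A}
    (hd : d ∈ blockSubst φ a γ) (hv : a ∉ v) :
    d * (v * of a) ∈ blockSubst φ a (γ * of (φ v)) := by
  rw [map_mul, blockSubst_of]
  exact Set.mul_mem_mul hd (Set.mul_mem_mul ⟨hv, rfl⟩ rfl)

theorem exists_mem_blockSubst_mul (w : FreeMonoid A) :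
    ∃ γ, ∃ d ∈ blockSubst φ a γ, ∃ v, a ∉ v ∧ d * v = w := by
  induction w using FreeMonoid.inductionOn_mul_of with
  | one => exact ⟨1, 1, blockSubst_one (φ := φ) (a := a) ▸ rfl, 1, notMem_one, mul_one 1⟩
  | mul_of w x ih =>
    obtain ⟨γ, d, hd, v, hv, rfl⟩ := ih
    by_cases hx : x = a
    · subst hx
      exact ⟨_, _, mul_mul_of_mem_blockSubst_mul_of hd hv, 1, notMem_one, by
        rw [mul_one, mul_assoc]⟩
    · refine ⟨γ, d, hd, v * of x, ?_, (mul_assoc ..).symm⟩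
      simp [mem_mul, mem_of, hv, Ne.symm hx]

theorem iUnion_blockSubst : ⋃ γ, blockSubst φ a γ = {1} ∪ Set.univ * {of a} := by
  ext d
  simp only [Set.mem_iUnion, Set.mem_union, Set.mem_singleton_iff, Set.mem_mul, Set.mem_univ,
    true_and, exists_eq_left]
  constructor
  · rintro ⟨γ, hd⟩
    rcases γ.eq_one_or_exists_eq_mul_of with rfl | ⟨γ, q, rfl⟩
    · exact .inl (by rwa [blockSubst_one] at hd)
    · rw [map_mul, blockSubst_of] at hd
      obtain ⟨d', -, _, ⟨u, -, _, rfl, rfl⟩, rfl⟩ := hd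
      exact .inr ⟨d' * u, mul_assoc ..⟩
  · rintro (rfl | ⟨w, rfl⟩)
    · exact ⟨1, by rw [blockSubst_one]; rfl⟩
    · obtain ⟨γ, d, hd, v, hv, rfl⟩ := exists_mem_blockSubst_mul (φ := φ) (a := a) w
      exact ⟨_, by rw [mul_assoc]; exact mul_mul_of_mem_blockSubst_mul_of hd hv⟩

theorem eq_of_mem_blockSubst {γ γ' : FreeMonoid M} {d : FreeMonoid A}
    (h : d ∈ blockSubst φ a γ) (h' : d ∈ blockSubst φ a γ') : γ = γ' := by
  induction γ using FreeMonoid.inductionOn' generalizing γ' d with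
  | one =>
    rw [blockSubst_one, Set.mem_singleton_iff] at h
    subst h
    cases γ' using FreeMonoid.casesOn with
    | one => rfl
    | of_mul q γ' =>
      obtain ⟨u, -, -, d', -, h⟩ := mem_blockSubst_of_mul.mp h'
      simp at h
  | of_mul q γ ih =>
    obtain ⟨u, hu, rfl, d, hd, rfl⟩ := mem_blockSubst_of_mul.mp h
    cases γ' using FreeMonoid.casesOn with
    | one => simp [blockSubst_one] at h'
    | of_mul q' γ' =>
      obtain ⟨u', hu', rfl, d', hd', h⟩ := mem_blockSubst_of_mul.mp h'
      obtain ⟨rfl, rfl⟩ := eq_and_eq_of_mul_of_mul_eq hu' hu h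
      rw [ih hd hd']

theorem pairwiseDisjoint_blockSubst : Set.univ.PairwiseDisjoint (blockSubst φ a) :=
  fun _ _ _ _ hne => Set.disjoint_left.mpr fun _ h h' => hne (eq_of_mem_blockSubst h h')

theorem val_sandwich_of_mem_blockSubst {γ : FreeMonoid M} {d : FreeMonoid A}
    (h : d ∈ blockSubst φ a γ) :
    (LocalDivisor.sandwich (φ (of a)) γ).val = φ (of a) * φ d := by
  induction γ using FreeMonoid.inductionOn' generalizing d with
  | one =>
    rw [blockSubst_one] at h
    rw [h, map_one, map_one, mul_one, LocalDivisor.val_one]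
  | of_mul q γ ih =>
    obtain ⟨u, -, rfl, d, hd, rfl⟩ := mem_blockSubst_of_mul.mp h
    rw [LocalDivisor.val_sandwich_of_mul, ih hd]
    simp [mul_assoc]

theorem exists_factorization_of_mem {w : FreeMonoid A} (ha : a ∈ w) :
    ∃ u, a ∉ u ∧ ∃ γ, ∃ d ∈ blockSubst φ a γ, ∃ v, a ∉ v ∧ u * of a * d * v = w := by
  obtain ⟨γ, d, hd, v, hv, rfl⟩ := exists_mem_blockSubst_mul (φ := φ) (a := a) w
  cases γ using FreeMonoid.casesOn with
  | one =>
    rw [blockSubst_one, Set.mem_singleton_iff] at hd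
    subst hd
    exact absurd (by simpa using ha) hv
  | of_mul q γ =>
    obtain ⟨u, hu, -, d, hd', rfl⟩ := mem_blockSubst_of_mul.mp hd
    exact ⟨u, hu, γ, d, hd', v, hv, rfl⟩

theorem SF.biUnion_blockSubst [Finite A] (hK : ∀ q, SF (fiberAvoiding φ a q))
    {P : Set (FreeMonoid M)} (hP : SF P) : SF (⋃ γ ∈ P, blockSubst φ a γ) := by
  induction hP with
  | full => rw [Set.biUnion_univ, iUnion_blockSubst]; exact union one (mul full (letter a))
  | letter q => rw [Set.biUnion_singleton, blockSubst_of]; exact mul (hK q) (letter a)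
  | union _ _ ih ih' => rw [Set.biUnion_union]; exact union ih ih'
  | diff _ _ ih ih' =>
    rw [← Set.biUnion_sdiff_biUnion_eq (pairwiseDisjoint_blockSubst.subset (Set.subset_univ _))]
    exact diff ih ih'
  | concat _ _ ih ih' =>
    rw [Lang.cat_eq_mul, Set.biUnion_mul_eq_mul_biUnion]
    exact mul ih ih'

variable (φ a) in
theorem setOf_map_eq_eq_union (p : M) :
    {w | φ w = p} = fiberAvoiding φ a p ∪
      ⋃ (q : M) (x : LocalDivisor (φ (of a))) (s : M) (_ : q * x.val * s = p),
        fiberAvoiding φ a q * {of a} *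
          (⋃ γ ∈ {γ | LocalDivisor.sandwich (φ (of a)) γ = x}, blockSubst φ a γ) *
          fiberAvoiding φ a s := by
  ext w
  constructor
  · intro hw
    by_cases ha : a ∈ w
    · obtain ⟨u, hu, γ, d, hd, v, hv, rfl⟩ := exists_factorization_of_mem (φ := φ) ha
      simp only [Set.mem_union, Set.mem_iUnion]
      refine .inr ⟨φ u, LocalDivisor.sandwich _ γ, φ v, ?_, ?_⟩
      · rw [← hw, val_sandwich_of_mem_blockSubst hd]
        simp [mul_assoc]
      · exact Set.mul_mem_mul (Set.mul_mem_mul (Set.mul_mem_mul ⟨hu, rfl⟩ rfl)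
          (Set.mem_biUnion rfl hd)) ⟨hv, rfl⟩
    · exact .inl ⟨ha, hw⟩
  · rintro (⟨-, hw⟩ | hw)
    · exact hw
    · simp only [Set.mem_iUnion] at hw
      obtain ⟨q, x, s, rfl, hw⟩ := hw
      obtain ⟨_, ⟨_, ⟨u, ⟨-, rfl⟩, _, rfl, rfl⟩, d, hd, rfl⟩, v, ⟨-, rfl⟩, rfl⟩ := hw
      obtain ⟨γ, rfl, hd'⟩ := Set.mem_iUnion₂.mp hd
      change φ _ = _
      rw [val_sandwich_of_mem_blockSubst hd']
      simp [mul_assoc]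

end Blocks

theorem SF.setOf_map_eq_of_localDivisor {A M : Type*} [Finite A] [Monoid M] [Finite M]
    {φ : FreeMonoid A →* M} {a : A} (hK : ∀ q, SF (fiberAvoiding φ a q))
    (hψ : ∀ x, SF {γ | LocalDivisor.sandwich (φ (of a)) γ = x}) (p : M) :
    SF {w | φ w = p} := by
  rw [setOf_map_eq_eq_union φ a p]
  exact union (hK p) (iUnion fun q => iUnion fun x => iUnion fun s => iUnion fun _ =>
    mul (mul (mul (hK q) (letter a)) (biUnion_blockSubst hK (hψ x))) (hK s))

theorem fiberAvoiding_eq_image {A M : Type*} [Monoid M] (φ : FreeMonoid A →* M) (a : A) (q : M) :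
    fiberAvoiding φ a q =
      map (Subtype.val : {b // b ≠ a} → A) '' {w | φ (map Subtype.val w) = q} := by
  rw [show {w | φ (map Subtype.val w) = q} = map Subtype.val ⁻¹' {w | φ w = q} from rfl,
    Set.image_preimage_eq_inter_range, range_map, Subtype.range_coe_subtype]
  ext w
  simp only [fiberAvoiding, Set.mem_inter_iff]
  aesop

theorem SF.setOf_map_eq_of_forall_map_of_eq_one {A M : Type*} [Monoid M]
    {φ : FreeMonoid A →* M} (h : ∀ b, φ (of b) = 1) (p : M) : SF {w | φ w = p} := by
  obtain rfl : φ = 1 := FreeMonoid.hom_eq h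
  by_cases hp : (1 : M) = p
  · simpa [hp] using full
  · simpa [hp] using empty

theorem SF.setOf_map_eq_of_aperiodic {A M : Type u} [Finite A] [Monoid M] [Finite M]
    (hM : Aperiodic M) (φ : FreeMonoid A →* M) (p : M) : SF {w | φ w = p} := by
  induction hn : Nat.card M using Nat.strong_induction_on generalizing A M with
  | _ n ihM =>
  induction hk : Nat.card A using Nat.strong_induction_on generalizing A p with
  | _ k ihA =>
  by_cases h1 : ∀ b, φ (of b) = 1
  · exact setOf_map_eq_of_forall_map_of_eq_one h1 p
  obtain ⟨a, ha⟩ := not_forall.mp h1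
  refine setOf_map_eq_of_localDivisor (a := a) (fun q => ?_) (fun x => ?_) p
  · have hcard : Nat.card {b // b ≠ a} < k := hk ▸ Finite.card_subtype_lt (x := a) (by simp)
    rw [fiberAvoiding_eq_image]
    exact (ihA _ hcard (φ.comp (map Subtype.val)) q rfl).image_map Subtype.val_injective
  · exact ihM _ (hn ▸ LocalDivisor.card_lt hM ha) (hM.localDivisor _) _ x rfl

/-- If `φ : A* → M` is a homomorphism to a finite aperiodic monoid, then for every `p ∈ M`
the language `φ⁻¹(p) = {w ∈ A* : φ(w) = p}` is star-free over `A`. -/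
theorem preimage_starfree_of_aperiodic {A M : Type*} [Finite A] [Monoid M] [Finite M]
    (hM : Aperiodic M) (φ : FreeMonoid A →* M) (p : M) :
    SF {w : FreeMonoid A | φ w = p} := by
  -- the induction uses `M` as an alphabet, so the alphabet is moved into the universe of `M`
  let e : ULift (Fin (Nat.card A)) ≃ A := Equiv.ulift.trans (Finite.equivFin A).symm
  have h := (SF.setOf_map_eq_of_aperiodic hM (φ.comp (map e)) p).image_map e.injective
  rwa [show {w | φ.comp (map e) w = p} = map e ⁻¹' {w | φ w = p} from rfl,
    Set.image_preimage_eq _ (map_surjective.mpr e.surjective)] at h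
end

section
/- Let A be a finite alphabet and L ⊆ A* a star-free language. Then the syntactic monoid Synt(L) = A*/≡_L is aperiodic: for every word u ∈ A* there exists a natural number n such that u^n ≡_L u^{n+1}, i.e., for all p, q ∈ A*, p u^n q ∈ L if and only if p u^{n+1} q ∈ L. -/
/-- The syntactic congruence of `L ⊆ A*`: `u ≡_L v` iff for all `p, q ∈ A*`,
`p u q ∈ L ↔ p v q ∈ L`.  The syntactic monoid `Synt(L)` is its quotient
`(syntacticCon L).Quotient`. -/
def syntacticCon {A : Type*} (L : Set (FreeMonoid A)) : Con (FreeMonoid A) where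
  r u v := ∀ p q : FreeMonoid A, p * u * q ∈ L ↔ p * v * q ∈ L
  iseqv := ⟨fun _ _ _ => Iff.rfl, fun h p q => (h p q).symm,
    fun h h' p q => (h p q).trans (h' p q)⟩
  mul' {w x y z} h h' := by
    intro p q
    have h1 := h' (p * w) q
    have h2 := h p (z * q)
    simp only [mul_assoc] at h1 h2 ⊢
    exact h1.trans h2

/-!
Say `n` is an aperiodicity index of `K` if `uⁿ ≡_K uⁿ⁺¹` for every word `u`; star-free languages
have one by structural induction. A language of words shorter than `N` has index `N`, as `p uᴺ q`
is too long once `u ≠ 1`; union and difference take the larger index. For `K · K'` with indices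
`n₁, n₂`, write `p uⁿ q = p uⁱ · uʲ q` with `i ≥ n₁`, `j ≥ n₂`: a cut into a `K`-word and a
`K'`-word falls right of `p uⁱ` or left of `uʲ q`, so one factor contains a block of at least
`n₁` resp. `n₂` copies of `u`, which can gain or lose a copy without leaving its language.
-/

theorem mul_pow_mul_pow_mul {M : Type*} [Monoid M] (p u q : M) {i j k : ℕ} (h : i + j = k) :
    p * u ^ i * (u ^ j * q) = p * u ^ k * q := by
  rw [← h, pow_add, mul_assoc, mul_assoc, mul_assoc]

theorem FreeMonoid.length_pow {α : Type*} (u : FreeMonoid α) (n : ℕ) :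
    (u ^ n).length = n * u.length := by
  induction n with
  | zero => rw [pow_zero, zero_mul, length_one]
  | succ n ih => rw [pow_succ, length_mul, ih, Nat.succ_mul]

theorem FreeMonoid.mul_eq_mul_iff {α : Type*} {a b c d : FreeMonoid α} :
    a * b = c * d ↔ (∃ s, c = a * s ∧ b = s * d) ∨ ∃ t, a = c * t ∧ d = t * b := by
  simp only [← toList.injective.eq_iff, toList_mul, List.append_eq_append_iff,
    toList.surjective.exists]

section Syntactic

variable {α : Type*} {K K' : Set (FreeMonoid α)} {a a' b b' : FreeMonoid α}

theorem syntacticCon_iff :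
    syntacticCon K a b ↔ ∀ p q : FreeMonoid α, p * a * q ∈ K ↔ p * b * q ∈ K :=
  Iff.rfl

theorem syntacticCon_univ (a b : FreeMonoid α) : syntacticCon Set.univ a b :=
  fun _ _ => Iff.rfl

theorem syntacticCon_union (h : syntacticCon K a b) (h' : syntacticCon K' a b) :
    syntacticCon (K ∪ K') a b :=
  fun p q => or_congr (h p q) (h' p q)

theorem syntacticCon_diff (h : syntacticCon K a b) (h' : syntacticCon K' a b) :
    syntacticCon (K \ K') a b :=
  fun p q => and_congr (h p q) (not_congr (h' p q))

theorem mem_cat_or_of_syntacticCon (ha : syntacticCon K a a') (hb : syntacticCon K' b b')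
    {p q : FreeMonoid α} (h : p * a * (b * q) ∈ Lang.cat K K') :
    p * a' * (b * q) ∈ Lang.cat K K' ∨ p * a * (b' * q) ∈ Lang.cat K K' := by
  obtain ⟨x, hx, y, hy, hxy⟩ := h
  rcases FreeMonoid.mul_eq_mul_iff.mp hxy with ⟨s, rfl, hs⟩ | ⟨t, hpa, rfl⟩
  · refine .inl ⟨p * a' * s, (ha p s).mp hx, y, hy, ?_⟩
    rw [hs]
    simp only [mul_assoc]
  · refine .inr ⟨x, hx, t * b' * q, (hb t q).mp (by rwa [← mul_assoc] at hy), ?_⟩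
    rw [← mul_assoc, hpa]
    simp only [mul_assoc]

end Syntactic

section AperiodicIndex

variable {α : Type*} {K K' : Set (FreeMonoid α)} {n₁ n₂ : ℕ}

def HasAperiodicIndex (K : Set (FreeMonoid α)) (n : ℕ) : Prop :=
  ∀ u : FreeMonoid α, syntacticCon K (u ^ n) (u ^ (n + 1))

theorem HasAperiodicIndex.mono {n m : ℕ} (h : HasAperiodicIndex K n) (hnm : n ≤ m) :
    HasAperiodicIndex K m := by
  induction m, hnm using Nat.le_induction with
  | base => exact h
  | succ m _ ih =>
    intro u
    rw [pow_succ' u m, pow_succ' u (m + 1)]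
    exact (syntacticCon K).mul ((syntacticCon K).refl u) (ih u)

theorem hasAperiodicIndex_of_length_lt {N : ℕ} (hK : ∀ w ∈ K, w.length < N) :
    HasAperiodicIndex K N := by
  intro u
  rcases eq_or_ne u 1 with rfl | hu
  · simpa only [one_pow] using (syntacticCon K).refl 1
  have hlong : ∀ k, N ≤ k → ∀ p q : FreeMonoid α, p * u ^ k * q ∉ K := by
    intro k hk p q hmem
    have hu₁ : 1 ≤ u.length := Nat.one_le_iff_ne_zero.mpr (mt FreeMonoid.length_eq_zero.mp hu)
    have hlen := hK _ hmem
    simp only [FreeMonoid.length_mul, FreeMonoid.length_pow] at hlen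
    have := Nat.le_mul_of_pos_right k hu₁
    omega
  exact fun p q => iff_of_false (hlong N le_rfl p q) (hlong (N + 1) N.le_succ p q)

theorem HasAperiodicIndex.union (h : HasAperiodicIndex K n₁) (h' : HasAperiodicIndex K' n₂) :
    HasAperiodicIndex (K ∪ K') (max n₁ n₂) :=
  fun u => syntacticCon_union (h.mono (le_max_left _ _) u) (h'.mono (le_max_right _ _) u)

theorem HasAperiodicIndex.diff (h : HasAperiodicIndex K n₁) (h' : HasAperiodicIndex K' n₂) :
    HasAperiodicIndex (K \ K') (max n₁ n₂) :=
  fun u => syntacticCon_diff (h.mono (le_max_left _ _) u) (h'.mono (le_max_right _ _) u)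

theorem HasAperiodicIndex.cat (h : HasAperiodicIndex K n₁) (h' : HasAperiodicIndex K' n₂) :
    HasAperiodicIndex (Lang.cat K K') (n₁ + n₂ + 1) := by
  intro u p q
  constructor
  · intro hmem
    rw [← mul_pow_mul_pow_mul p u q (i := n₁) (j := n₂ + 1) (by omega)] at hmem
    rcases mem_cat_or_of_syntacticCon (h u) (h'.mono n₂.le_succ u) hmem with hmem | hmem
      <;> rwa [mul_pow_mul_pow_mul p u q (k := n₁ + n₂ + 1 + 1) (by omega)] at hmem
  · intro hmem
    rw [← mul_pow_mul_pow_mul p u q (i := n₁ + 1) (j := n₂ + 1) (by omega)] at hmem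
    rcases mem_cat_or_of_syntacticCon ((syntacticCon K).symm (h u))
      ((syntacticCon K').symm (h' u)) hmem with hmem | hmem
      <;> rwa [mul_pow_mul_pow_mul p u q (k := n₁ + n₂ + 1) (by omega)] at hmem

theorem SF.exists_hasAperiodicIndex (hK : SF K) : ∃ n, HasAperiodicIndex K n := by
  induction hK with
  | full => exact ⟨0, fun u => syntacticCon_univ _ _⟩
  | letter a =>
    refine ⟨2, hasAperiodicIndex_of_length_lt fun w hw => ?_⟩
    rw [Set.mem_singleton_iff.mp hw, FreeMonoid.length_of]
    exact one_lt_two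
  | union _ _ ih ih' =>
    exact ih.elim fun _ h => ih'.elim fun _ h' => ⟨_, h.union h'⟩
  | diff _ _ ih ih' =>
    exact ih.elim fun _ h => ih'.elim fun _ h' => ⟨_, h.diff h'⟩
  | concat _ _ ih ih' =>
    exact ih.elim fun _ h => ih'.elim fun _ h' => ⟨_, h.cat h'⟩

end AperiodicIndex

theorem syntacticMonoid_aperiodic_of_starfree_general {A : Type*}
    (L : Set (FreeMonoid A)) (hL : SF L) :
    Aperiodic (syntacticCon L).Quotient ∧
    ∀ u : FreeMonoid A, ∃ n : ℕ, ∀ p q : FreeMonoid A,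
      p * u ^ n * q ∈ L ↔ p * u ^ (n + 1) * q ∈ L := by
  obtain ⟨n, hn⟩ := hL.exists_hasAperiodicIndex
  refine ⟨fun x => ?_, fun u => ⟨n, syntacticCon_iff.mp (hn u)⟩⟩
  induction x using Con.induction_on with
  | H u => exact ⟨n, (Con.eq _).mpr (hn u)⟩

/-- If `L ⊆ A*` is star-free, then the syntactic monoid `Synt(L) = A*/≡_L` is aperiodic:
for every `u ∈ A*` there is `n ∈ ℕ` with `uⁿ ≡_L u^{n+1}`, i.e. for all `p, q ∈ A*`,
`p uⁿ q ∈ L ↔ p u^{n+1} q ∈ L`. -/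
theorem syntacticMonoid_aperiodic_of_starfree {A : Type*} [Finite A]
    (L : Set (FreeMonoid A)) (hL : SF L) :
    Aperiodic (syntacticCon L).Quotient ∧
    ∀ u : FreeMonoid A, ∃ n : ℕ, ∀ p q : FreeMonoid A,
      p * u ^ n * q ∈ L ↔ p * u ^ (n + 1) * q ∈ L :=
  syntacticMonoid_aperiodic_of_starfree_general L hL
end
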